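/- The spider transition densities satisfy the Chapman–Kolmogorov equation: for s, t > 0 and points x, z on the spider, p(t+s, x, z) = Σⱼ ∫₀^∞ p(t, x, yⱼ) p(s, yⱼ, z) dyⱼ, where the sum is over the N legs. -/

import Mathlib

/-! Write `g_t` for the Gaussian heat kernel on `ℝ`. The spider kernel has the form
`p_t(i,x,j,y) = δᵢⱼ g_t(x - y) + Sᵢⱼ g_t(x + y)` with the scattering matrix
`S = (2/N) J - 1`, which is an involution. Expanding the Chapman–Kolmogorov sum, the
coefficients recombine through `1 * 1 = S * S = 1` and `1 * S = S * 1 = S`, and each Gaussian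
term pairs with its mirror image `y ↦ -y` to turn the integral over a leg into a full-line
convolution `g_t * g_s = g_{t+s}`. -/

open Real MeasureTheory

/-- The transition density of Brownian motion on the `N`-legged spider graph. A point of the
spider is encoded as a pair (leg index, nonnegative coordinate). -/
noncomputable def spiderKernel (N : ℕ) (t : ℝ) (i : Fin N) (x : ℝ) (j : Fin N) (y : ℝ) : ℝ :=
  if i = j then
    (1 / Real.sqrt (2 * π * t)) *
      (Real.exp (-(x - y)^2 / (2*t)) - ((N - 2 : ℝ) / N) * Real.exp (-(x + y)^2 / (2*t)))
  else
    (2 / N) * (Real.exp (-(x + y)^2 / (2*t)) / Real.sqrt (2 * π * t))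

open Set

noncomputable def heatKernel (t u : ℝ) : ℝ := Real.exp (-u ^ 2 / (2 * t)) / √(2 * π * t)

lemma heatKernel_neg (t u : ℝ) : heatKernel t (-u) = heatKernel t u := by
  simp only [heatKernel, neg_sq]

lemma heatKernel_neg_sub (t u v : ℝ) : heatKernel t (-u - v) = heatKernel t (u + v) := by
  rw [← neg_add', heatKernel_neg]

section Gaussian

variable {b : ℝ}

lemma exp_quadratic_eq (hb : b ≠ 0) (c d x : ℝ) :
    Real.exp (-b * x ^ 2 + c * x + d)
      = Real.exp (-b * (x - c / (2 * b)) ^ 2) * Real.exp (d + c ^ 2 / (4 * b)) := by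
  rw [← Real.exp_add]
  congr 1
  field_simp
  ring

lemma integrable_exp_quadratic (hb : 0 < b) (c d : ℝ) :
    Integrable fun x : ℝ ↦ Real.exp (-b * x ^ 2 + c * x + d) := by
  simp_rw [exp_quadratic_eq hb.ne']
  exact ((integrable_exp_neg_mul_sq hb).comp_sub_right (c / (2 * b))).mul_const _

lemma integral_exp_quadratic (hb : 0 < b) (c d : ℝ) :
    ∫ x : ℝ, Real.exp (-b * x ^ 2 + c * x + d) = √(π / b) * Real.exp (d + c ^ 2 / (4 * b)) := by
  simp_rw [exp_quadratic_eq hb.ne', integral_mul_const,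
    integral_sub_right_eq_self (fun x : ℝ ↦ Real.exp (-b * x ^ 2)), integral_gaussian]

end Gaussian

lemma integral_Ioi_add_comp_neg {E : Type*} [NormedAddCommGroup E] [NormedSpace ℝ E]
    {f : ℝ → E} (hf : Integrable f) :
    ∫ y in Ioi 0, (f y + f (-y)) = ∫ y, f y := by
  rw [integral_add hf.integrableOn hf.comp_neg.integrableOn, integral_comp_neg_Ioi, neg_zero,
    add_comm, intervalIntegral.integral_Iic_add_Ioi hf.integrableOn hf.integrableOn]

section HeatKernel

variable {s t : ℝ}

lemma heatKernel_mul_heatKernel (ht : 0 < t) (hs : 0 < s) (a c y : ℝ) :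
    heatKernel t (a - y) * heatKernel s (y - c) =
      Real.exp (-((t + s) / (2 * t * s)) * y ^ 2 + (a / t + c / s) * y
          + (-a ^ 2 / (2 * t) - c ^ 2 / (2 * s)))
        / (√(2 * π * t) * √(2 * π * s)) := by
  rw [heatKernel, heatKernel, div_mul_div_comm, ← Real.exp_add]
  congr 2
  field_simp
  ring

lemma integrable_heatKernel_mul (ht : 0 < t) (hs : 0 < s) (a c : ℝ) :
    Integrable fun y ↦ heatKernel t (a - y) * heatKernel s (y - c) := by
  simp_rw [heatKernel_mul_heatKernel ht hs]
  exact (integrable_exp_quadratic (by positivity) _ _).div_const _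

lemma integrable_heatKernel_add_mul (ht : 0 < t) (hs : 0 < s) (a c : ℝ) :
    Integrable fun y ↦ heatKernel t (a + y) * heatKernel s (y + c) := by
  refine (integrable_heatKernel_mul ht hs a c).comp_neg.congr (ae_of_all _ fun y ↦ ?_)
  simp only [sub_neg_eq_add, heatKernel_neg_sub]

lemma integrable_heatKernel_reflection (ht : 0 < t) (hs : 0 < s) (a c : ℝ) :
    Integrable fun y ↦ heatKernel t (a - y) * heatKernel s (y - c)
      + heatKernel t (a + y) * heatKernel s (y + c) :=
  (integrable_heatKernel_mul ht hs a c).add (integrable_heatKernel_add_mul ht hs a c)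

lemma integral_heatKernel_mul (ht : 0 < t) (hs : 0 < s) (a c : ℝ) :
    ∫ y, heatKernel t (a - y) * heatKernel s (y - c) = heatKernel (t + s) (a - c) := by
  simp_rw [heatKernel_mul_heatKernel ht hs, integral_div,
    integral_exp_quadratic (show 0 < (t + s) / (2 * t * s) by positivity), heatKernel]
  have hsqrt : √(π / ((t + s) / (2 * t * s))) / (√(2 * π * t) * √(2 * π * s))
      = 1 / √(2 * π * (t + s)) := by
    rw [div_eq_div_iff (by positivity) (by positivity), one_mul, ← Real.sqrt_mul (by positivity),
      ← Real.sqrt_mul (by positivity)]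
    congr 1
    field_simp
  rw [mul_comm, mul_div_assoc, hsqrt, mul_one_div]
  congr 2
  field_simp
  ring

lemma setIntegral_Ioi_heatKernel_reflection (ht : 0 < t) (hs : 0 < s) (a c : ℝ) :
    ∫ y in Ioi 0, (heatKernel t (a - y) * heatKernel s (y - c)
        + heatKernel t (a + y) * heatKernel s (y + c)) = heatKernel (t + s) (a - c) := by
  rw [← integral_heatKernel_mul ht hs, ← integral_Ioi_add_comp_neg
    (integrable_heatKernel_mul ht hs a c)]
  refine setIntegral_congr_fun measurableSet_Ioi fun y _ ↦ ?_
  simp only [sub_neg_eq_add, heatKernel_neg_sub]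

end HeatKernel

section StarGraph

variable {ι : Type*} [DecidableEq ι]

noncomputable def starHeatKernel (S : Matrix ι ι ℝ) (t : ℝ) (i : ι) (x : ℝ) (j : ι) (y : ℝ) :
    ℝ :=
  (1 : Matrix ι ι ℝ) i j * heatKernel t (x - y) + S i j * heatKernel t (x + y)

lemma sum_one_add_mul_one_add [Fintype ι] {S : Matrix ι ι ℝ} (hS : S * S = 1) (i k : ι)
    (a b c d : ℝ) :
    ∑ j, ((1 : Matrix ι ι ℝ) i j * a + S i j * b) * ((1 : Matrix ι ι ℝ) j k * c + S j k * d)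
      = (1 : Matrix ι ι ℝ) i k * (a * c + b * d) + S i k * (a * d + b * c) := by
  simp only [mul_add, add_mul, mul_mul_mul_comm _ a, mul_mul_mul_comm _ b, Finset.sum_add_distrib,
    ← Finset.sum_mul, ← Matrix.mul_apply, hS, Matrix.one_mul, Matrix.mul_one]
  ring

variable {S : Matrix ι ι ℝ} {s t : ℝ}

lemma integrable_starHeatKernel_mul (ht : 0 < t) (hs : 0 < s) (i : ι) (x : ℝ) (j k : ι)
    (z : ℝ) : Integrable fun y ↦ starHeatKernel S t i x j y * starHeatKernel S s j y k z := by
  have h₁ := integrable_heatKernel_mul ht hs x z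
  have h₂ : Integrable fun y ↦ heatKernel t (x - y) * heatKernel s (y + z) := by
    simpa only [sub_neg_eq_add] using integrable_heatKernel_mul ht hs x (-z)
  have h₃ : Integrable fun y ↦ heatKernel t (x + y) * heatKernel s (y - z) := by
    simpa only [← sub_eq_add_neg] using integrable_heatKernel_add_mul ht hs x (-z)
  have h₄ := integrable_heatKernel_add_mul ht hs x z
  simp only [starHeatKernel, mul_add, add_mul, mul_mul_mul_comm _ (heatKernel t _)]
  exact ((h₁.const_mul _).add (h₃.const_mul _)).add ((h₂.const_mul _).add (h₄.const_mul _))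

theorem starHeatKernel_chapman_kolmogorov [Fintype ι] (hS : S * S = 1) (ht : 0 < t)
    (hs : 0 < s) (i : ι) (x : ℝ) (k : ι) (z : ℝ) :
    starHeatKernel S (t + s) i x k z =
      ∑ j, ∫ y in Ioi 0, starHeatKernel S t i x j y * starHeatKernel S s j y k z := by
  have h_direct := setIntegral_Ioi_heatKernel_reflection ht hs x z
  have h_reflected : ∫ y in Ioi 0, (heatKernel t (x - y) * heatKernel s (y + z)
      + heatKernel t (x + y) * heatKernel s (y - z)) = heatKernel (t + s) (x + z) := by
    simpa only [sub_neg_eq_add, ← sub_eq_add_neg] using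
      setIntegral_Ioi_heatKernel_reflection ht hs x (-z)
  have h_direct_int := integrable_heatKernel_reflection ht hs x z
  have h_reflected_int : Integrable fun y ↦ heatKernel t (x - y) * heatKernel s (y + z)
      + heatKernel t (x + y) * heatKernel s (y - z) := by
    simpa only [sub_neg_eq_add, ← sub_eq_add_neg] using
      integrable_heatKernel_reflection ht hs x (-z)
  rw [← integral_finsetSum _ fun j _ ↦
    (integrable_starHeatKernel_mul ht hs i x j k z).integrableOn]
  simp only [starHeatKernel, sum_one_add_mul_one_add hS]
  rw [integral_add (h_direct_int.const_mul _).integrableOn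
      (h_reflected_int.const_mul _).integrableOn, integral_const_mul, integral_const_mul,
    h_direct, h_reflected]

end StarGraph

noncomputable def spiderScattering (N : ℕ) : Matrix (Fin N) (Fin N) ℝ :=
  Matrix.of (fun _ _ ↦ (2 / N : ℝ)) - 1

lemma spiderScattering_mul_self {N : ℕ} (hN : N ≠ 0) :
    spiderScattering N * spiderScattering N = 1 := by
  rw [spiderScattering, sub_mul, mul_sub, mul_sub, one_mul, mul_one, mul_one]
  ext i k
  simp only [Matrix.sub_apply, Matrix.mul_apply, Matrix.of_apply, Finset.sum_const,
    Finset.card_univ, Fintype.card_fin, nsmul_eq_mul]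
  field_simp
  ring

lemma spiderKernel_eq_starHeatKernel {N : ℕ} (hN : N ≠ 0) (t : ℝ) (i : Fin N) (x : ℝ)
    (j : Fin N) (y : ℝ) :
    spiderKernel N t i x j y = starHeatKernel (spiderScattering N) t i x j y := by
  by_cases hij : i = j
  · subst hij
    simp only [spiderKernel, starHeatKernel, spiderScattering, heatKernel, if_true,
      Matrix.sub_apply, Matrix.of_apply, Matrix.one_apply_eq]
    field_simp
    ring
  · simp [spiderKernel, starHeatKernel, spiderScattering, heatKernel, hij]

theorem spiderKernel_chapman_kolmogorov_general (N : ℕ)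
    (s t : ℝ) (hs : 0 < s) (ht : 0 < t)
    (i : Fin N) (x : ℝ) (k : Fin N) (z : ℝ) :
    spiderKernel N (t + s) i x k z =
      ∑ j : Fin N, ∫ y in Set.Ioi (0:ℝ),
        spiderKernel N t i x j y * spiderKernel N s j y k z := by
  have hN : N ≠ 0 := i.pos.ne'
  simp only [spiderKernel_eq_starHeatKernel hN]
  exact starHeatKernel_chapman_kolmogorov (spiderScattering_mul_self hN) ht hs i x k z

/-- The spider transition densities satisfy the Chapman–Kolmogorov equation. -/
theorem spiderKernel_chapman_kolmogorov (N : ℕ) (hN : 2 ≤ N)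
    (s t : ℝ) (hs : 0 < s) (ht : 0 < t)
    (i : Fin N) (x : ℝ) (hx : 0 ≤ x) (k : Fin N) (z : ℝ) (hz : 0 ≤ z) :
    spiderKernel N (t + s) i x k z =
      ∑ j : Fin N, ∫ y in Set.Ioi (0:ℝ),
        spiderKernel N t i x j y * spiderKernel N s j y k z :=
  spiderKernel_chapman_kolmogorov_general N s t hs ht i x k z
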